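/- Let M be a cofinally ultrahomogeneous structure for a cofinal collection E, i.e., every isomorphism between substructures generated by members of E extends to an automorphism of M. If 𝐚 ∈ E, then the substructure of M generated by 𝐚 is an amalgamation base in the age of M. -/

import Mathlib

/- Self-contained framework for computable ages and cofinal Fraïssé limits. -/

namespace CFL

open Classical

/-! ### Oracle computability -/

/-- The characteristic partial function of a set of naturals. -/
noncomputable def chi (A : Set ℕ) : ℕ →. ℕ :=
  fun n => Part.some (if n ∈ A then 1 else 0)

/-- Codes for oracle partial recursive functions. -/
inductive OCode : Type
  | zero : OCode
  | succ : OCode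
  | left : OCode
  | right : OCode
  | oracle : OCode
  | pair : OCode → OCode → OCode
  | comp : OCode → OCode → OCode
  | prec : OCode → OCode → OCode
  | rfind' : OCode → OCode

/-- Evaluation of an oracle code relative to an oracle `O`. -/
def OCode.eval (O : ℕ →. ℕ) : OCode → ℕ →. ℕ
  | OCode.zero => pure 0
  | OCode.succ => Nat.succ
  | OCode.left => ↑fun n : ℕ => n.unpair.1
  | OCode.right => ↑fun n : ℕ => n.unpair.2
  | OCode.oracle => O
  | OCode.pair cf cg => fun n => Nat.pair <$> OCode.eval O cf n <*> OCode.eval O cg n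
  | OCode.comp cf cg => fun n => OCode.eval O cg n >>= OCode.eval O cf
  | OCode.prec cf cg =>
    Nat.unpaired fun a n =>
      n.rec (OCode.eval O cf a) fun y IH => do
        let i ← IH
        OCode.eval O cg (Nat.pair a (Nat.pair y i))
  | OCode.rfind' cf =>
    Nat.unpaired fun a m =>
      (Nat.rfind fun n => (fun m => m = 0) <$> OCode.eval O cf (Nat.pair a (n + m))).map
        (· + m)

/-- A numerical code of an `OCode`. -/
def OCode.encodeCode : OCode → ℕ
  | OCode.zero => 0
  | OCode.succ => 1
  | OCode.left => 2
  | OCode.right => 3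
  | OCode.oracle => 4
  | OCode.pair cf cg => 4 * Nat.pair cf.encodeCode cg.encodeCode + 5
  | OCode.comp cf cg => 4 * Nat.pair cf.encodeCode cg.encodeCode + 6
  | OCode.prec cf cg => 4 * Nat.pair cf.encodeCode cg.encodeCode + 7
  | OCode.rfind' cf => 4 * cf.encodeCode + 8

/-- `f` is a partial function recursive in the oracle set `O`. -/
def RecFunIn (O : Set ℕ) (f : ℕ →. ℕ) : Prop :=
  ∃ c : OCode, OCode.eval (chi O) c = f

/-- The code `c` computes the total function `f` relative to the oracle set `O`. -/
def ComputesIn (O : Set ℕ) (c : OCode) (f : ℕ → ℕ) : Prop :=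
  ∀ n, OCode.eval (chi O) c n = Part.some (f n)

/-- `f` is a total function computable in the oracle set `O`. -/
def TotalComputableIn (O : Set ℕ) (f : ℕ → ℕ) : Prop :=
  ∃ c : OCode, ComputesIn O c f

/-- The set `A` is computable in the oracle set `O`. -/
def SetRecIn (O A : Set ℕ) : Prop := RecFunIn O (chi A)

/-- Turing reducibility (on sets of naturals, regarded as representatives of
Turing degrees). -/
def TuringLE (A B : Set ℕ) : Prop := SetRecIn B A

/-- The set `A` is computably enumerable in the oracle set `O`. -/
def CEIn (O A : Set ℕ) : Prop :=
  ∃ c : OCode, ∀ n, n ∈ A ↔ (OCode.eval (chi O) c n).Dom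

/-- The Turing jump of a set of naturals. -/
def jump (O : Set ℕ) : Set ℕ :=
  { e | ∃ c : OCode, c.encodeCode = (Nat.unpair e).1 ∧
      (OCode.eval (chi O) c (Nat.unpair e).2).Dom }

/-- `0'`, the jump of the least degree. -/
def zeroJump : Set ℕ := jump ∅

/-- `0''`. -/
def zeroJump2 : Set ℕ := jump zeroJump

/-- `0'''`. -/
def zeroJump3 : Set ℕ := jump zeroJump2

/-! ### Languages and structures -/

/-- A (coded) first-order language: `relArity r = some k` means that `r` is the code of a
relation symbol of arity `k`, and similarly for function symbols. -/
structure Lang where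
  relArity : ℕ → Option ℕ
  funArity : ℕ → Option ℕ

/-- The language is computably represented. -/
def Lang.ComputableRep (L : Lang) : Prop :=
  TotalComputableIn ∅ (fun r => Encodable.encode (L.relArity r)) ∧
  TotalComputableIn ∅ (fun f => Encodable.encode (L.funArity f))

/-- A finite relational language. -/
def Lang.FiniteRelational (L : Lang) : Prop :=
  (∀ f, L.funArity f = none) ∧ { r | (L.relArity r).isSome = true }.Finite

/-- A finite language. -/
def Lang.FiniteLang (L : Lang) : Prop :=
  { r | (L.relArity r).isSome = true }.Finite ∧
  { f | (L.funArity f).isSome = true }.Finite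

/-- An `L`-structure with underlying set a set of naturals. -/
structure Str (L : Lang) where
  dom : Set ℕ
  rel : ℕ → List ℕ → Prop
  fn : ℕ → List ℕ → ℕ
  rel_valid : ∀ r as, rel r as → L.relArity r = some as.length ∧ ∀ x ∈ as, x ∈ dom
  fn_mem : ∀ f as, L.funArity f = some as.length → (∀ x ∈ as, x ∈ dom) → fn f as ∈ dom

variable {L : Lang}

/-- The (finite) tuple `as` lies in the structure `A`. -/
def TupleIn (A : Str L) (as : List ℕ) : Prop := ∀ x ∈ as, x ∈ A.dom

/-- Membership in the substructure of `A` generated by the tuple `s`. -/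
inductive InClosure (A : Str L) (s : List ℕ) : ℕ → Prop
  | base {x : ℕ} : x ∈ s → x ∈ A.dom → InClosure A s x
  | fn (f : ℕ) (as : List ℕ) : L.funArity f = some as.length →
      (∀ x ∈ as, InClosure A s x) → InClosure A s (A.fn f as)

theorem InClosure.mem_dom {A : Str L} {s : List ℕ} {x : ℕ}
    (h : InClosure A s x) : x ∈ A.dom := by
  induction h with
  | base _ hx => exact hx
  | fn f as ha _ ih => exact A.fn_mem f as ha ih

/-- The substructure of `A` generated by the tuple `s`. -/
def Str.sub (A : Str L) (s : List ℕ) : Str L where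
  dom := { x | InClosure A s x }
  rel r as := A.rel r as ∧ ∀ x ∈ as, InClosure A s x
  fn := A.fn
  rel_valid := fun r as h => ⟨(A.rel_valid r as h.1).1, h.2⟩
  fn_mem := fun f as ha hm => InClosure.fn f as ha hm

/-- `h` is an embedding of `A` into `B`. -/
def IsEmbMap (A B : Str L) (h : ℕ → ℕ) : Prop :=
  (∀ x ∈ A.dom, h x ∈ B.dom) ∧
  (∀ x ∈ A.dom, ∀ y ∈ A.dom, h x = h y → x = y) ∧
  (∀ r as, TupleIn A as → (A.rel r as ↔ B.rel r (as.map h))) ∧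
  (∀ f as, L.funArity f = some as.length → TupleIn A as →
    h (A.fn f as) = B.fn f (as.map h))

/-- `A` embeds into `B`. -/
def Embeds (A B : Str L) : Prop := ∃ h, IsEmbMap A B h

/-- `h` is an isomorphism of `A` onto `B`. -/
def IsIsoMap (A B : Str L) (h : ℕ → ℕ) : Prop :=
  IsEmbMap A B h ∧ ∀ y ∈ B.dom, ∃ x ∈ A.dom, h x = y

/-- `A` and `B` are isomorphic. -/
def Isom (A B : Str L) : Prop := ∃ h, IsIsoMap A B h

/-- `as ∼cl bs`: the coordinatewise map extends to an isomorphism of generated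
substructures. -/
def ClSim (A : Str L) (as : List ℕ) (B : Str L) (bs : List ℕ) : Prop :=
  ∃ h : ℕ → ℕ, as.map h = bs ∧ IsIsoMap (A.sub as) (B.sub bs) h

/-- `as ∼tuple bs`: equal length and the same pattern of equalities among coordinates. -/
def TupleSim (as bs : List ℕ) : Prop :=
  ∃ h h' : ℕ → ℕ, as.map h = bs ∧ bs.map h' = as

/-- `A` is finitely generated. -/
def Str.FG (A : Str L) : Prop :=
  ∃ s : List ℕ, TupleIn A s ∧ ∀ x, x ∈ A.dom ↔ InClosure A s x

/-- `g` is an automorphism of `M`. -/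
def IsAutoOf (M : Str L) (g : ℕ → ℕ) : Prop := IsIsoMap M M g

/-! ### Ages (as isomorphism-closed classes) -/

/-- `B` belongs to the age of `M`, i.e. `B` is isomorphic to a finitely generated
substructure of `M`. -/
def AgeMemOf (M : Str L) (B : Str L) : Prop :=
  ∃ as : List ℕ, TupleIn M as ∧ Isom B (M.sub as)

/-- The age of a structure `M`. -/
def ageOf (M : Str L) : Set (Str L) := { B | AgeMemOf M B }

/-- The hereditary property. -/
def HP (C : Set (Str L)) : Prop :=
  ∀ B ∈ C, ∀ as : List ℕ, TupleIn B as → B.sub as ∈ C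

/-- The joint embedding property. -/
def JEP (C : Set (Str L)) : Prop :=
  ∀ A ∈ C, ∀ B ∈ C, ∃ D ∈ C, Embeds A D ∧ Embeds B D

/-- Every pair of embeddings with domain `A` into members of `C` can be amalgamated
over `A` inside `C`. -/
def AmalgamatesOver (C : Set (Str L)) (A : Str L) : Prop :=
  ∀ B₀ ∈ C, ∀ B₁ ∈ C, ∀ f₀ f₁ : ℕ → ℕ, IsEmbMap A B₀ f₀ → IsEmbMap A B₁ f₁ →
    ∃ D ∈ C, ∃ g₀ g₁ : ℕ → ℕ, IsEmbMap B₀ D g₀ ∧ IsEmbMap B₁ D g₁ ∧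
      ∀ x ∈ A.dom, g₀ (f₀ x) = g₁ (f₁ x)

/-- The amalgamation property. -/
def AP (C : Set (Str L)) : Prop := ∀ A ∈ C, AmalgamatesOver C A

/-- `A` is an amalgamation base of the class `C`. -/
def AmalgBase (C : Set (Str L)) (A : Str L) : Prop := A ∈ C ∧ AmalgamatesOver C A

/-- The cofinal amalgamation property. -/
def CoAP (C : Set (Str L)) : Prop :=
  ∀ A ∈ C, ∃ A' : Str L, AmalgBase C A' ∧ Embeds A A'

/-! ### Computable ages -/

/-- An (abstract) enumerated age: for each index `i`, a generating tuple `tup i` and the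
structure `str i` it generates. -/
structure CompAge (L : Lang) where
  tup : ℕ → List ℕ
  str : ℕ → Str L
  tup_mem : ∀ i, TupleIn (str i) (tup i)
  gen : ∀ i x, x ∈ (str i).dom ↔ InClosure (str i) (tup i) x

/-- The class of structures represented by the enumerated age `K`. -/
def CompAge.cls (K : CompAge L) : Set (Str L) := { B | ∃ i, Isom B (K.str i) }

/-- The structure `M` is computable in the oracle set `s`. -/
def StrComputableIn (s : Set ℕ) (M : Str L) : Prop :=
  SetRecIn s M.dom ∧
  SetRecIn s { p | ∃ r as, TupleIn M as ∧ M.rel r as ∧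
      p = Nat.pair r (Encodable.encode as) } ∧
  SetRecIn s { p | ∃ f as b, L.funArity f = some as.length ∧ TupleIn M as ∧
      M.fn f as = b ∧ p = Nat.pair f (Nat.pair (Encodable.encode as) b) }

/-- The coded diagram of an enumerated age. -/
def CompAge.diag (K : CompAge L) : Set ℕ :=
  { p | ∃ i, p = Nat.pair 0 (Nat.pair i (Encodable.encode (K.tup i))) } ∪
  { p | ∃ i x, x ∈ (K.str i).dom ∧ p = Nat.pair 1 (Nat.pair i x) } ∪
  { p | ∃ i r as, TupleIn (K.str i) as ∧ (K.str i).rel r as ∧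
      p = Nat.pair 2 (Nat.pair i (Nat.pair r (Encodable.encode as))) } ∪
  { p | ∃ i r as, TupleIn (K.str i) as ∧ L.relArity r = some as.length ∧
      ¬ (K.str i).rel r as ∧
      p = Nat.pair 3 (Nat.pair i (Nat.pair r (Encodable.encode as))) } ∪
  { p | ∃ i f as b, TupleIn (K.str i) as ∧ L.funArity f = some as.length ∧
      (K.str i).fn f as = b ∧
      p = Nat.pair 4 (Nat.pair i (Nat.pair f (Nat.pair (Encodable.encode as) b))) }

/-- `K` is an `s`-computable age: its diagram is c.e. in `s` and each of its structures
is computable in `s`. -/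
def AgeComputableIn (s : Set ℕ) (K : CompAge L) : Prop :=
  CEIn s K.diag ∧ ∀ i, StrComputableIn s (K.str i)

/-- The embedding information of an enumerated age, as a set of naturals. -/
def EmbedInfo (K : CompAge L) : Set ℕ :=
  { p | ∃ k₀ b₀ k₁ b₁, TupleIn (K.str k₀) b₀ ∧ TupleIn (K.str k₁) b₁ ∧
      ClSim (K.str k₀) b₀ (K.str k₁) b₁ ∧
      p = Nat.pair k₀ (Nat.pair (Encodable.encode b₀)
            (Nat.pair k₁ (Encodable.encode b₁))) }

/-! ### Potential embeddings, spans, and amalgamation diagrams -/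

/-- A potential embedding: a pair of indices and a tuple in the codomain structure. -/
structure PotEmb where
  i : ℕ
  j : ℕ
  c : List ℕ

/-- A numerical code of a potential embedding. -/
def PotEmb.code (F : PotEmb) : ℕ :=
  Nat.pair F.i (Nat.pair F.j (Encodable.encode F.c))

/-- The potential embedding is well-formed with respect to `K`. -/
def PotEmb.Valid (K : CompAge L) (F : PotEmb) : Prop :=
  F.c.length = (K.tup F.i).length ∧ TupleIn (K.str F.j) F.c

/-- The potential embedding is an embedding. -/
def PotEmb.IsEmb (K : CompAge L) (F : PotEmb) : Prop :=
  ClSim (K.str F.i) (K.tup F.i) (K.str F.j) F.c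

/-- The potential embedding is an isomorphism (its range generates the codomain). -/
def PotEmb.IsIso (K : CompAge L) (F : PotEmb) : Prop :=
  F.IsEmb K ∧ ∀ x ∈ (K.str F.j).dom, InClosure (K.str F.j) F.c x

/-- `h` realizes the potential embedding `F` as a map on the domain structure. -/
def ExtMap (K : CompAge L) (F : PotEmb) (h : ℕ → ℕ) : Prop :=
  (K.tup F.i).map h = F.c ∧ IsEmbMap (K.str F.i) (K.str F.j) h

/-- `(F₀, F₁)` is a potential span. -/
def PotSpan (K : CompAge L) (F₀ F₁ : PotEmb) : Prop :=
  F₀.Valid K ∧ F₁.Valid K ∧ F₀.i = F₁.i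

/-- `(G₀, G₁)` is an amalgamation diagram over the potential span `(F₀, F₁)`. -/
def AmalgDiagOver (K : CompAge L) (F₀ F₁ G₀ G₁ : PotEmb) : Prop :=
  G₀.Valid K ∧ G₁.Valid K ∧ G₀.IsEmb K ∧
  G₀.i = F₀.j ∧ G₁.i = F₁.j ∧ G₀.j = G₁.j ∧
  (F₀.IsEmb K → F₁.IsEmb K → G₁.IsEmb K ∧
    ∀ h₀ h₁ : ℕ → ℕ, ExtMap K G₀ h₀ → ExtMap K G₁ h₁ →
      F₀.c.map h₀ = F₁.c.map h₁)

/-- `H` is the composition `F ∘ G` of potential embeddings (where `F` is an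
embedding realized by any `h` extending it). -/
def CompRel (K : CompAge L) (F G H : PotEmb) : Prop :=
  G.j = F.i ∧ H.i = G.i ∧ H.j = F.j ∧
  ∀ h : ℕ → ℕ, ExtMap K F h → H.c = G.c.map h

/-! ### Computable versions of HP, JEP, AP, coAP -/

/-- The `s`-computable hereditary property. -/
def CHP (s : Set ℕ) (K : CompAge L) : Prop :=
  ∃ c : OCode, ∀ i (b : List ℕ), TupleIn (K.str i) b →
    ∃ j, OCode.eval (chi s) c (Nat.pair i (Encodable.encode b)) = Part.some j ∧
      ClSim (K.str j) (K.tup j) (K.str i) b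

/-- The `s`-computable joint embedding property. -/
def CJEP (s : Set ℕ) (K : CompAge L) : Prop :=
  ∃ c : OCode, ∀ i j : ℕ, ∃ F G : PotEmb,
    OCode.eval (chi s) c (Nat.pair i j) = Part.some (Nat.pair F.code G.code) ∧
    F.Valid K ∧ G.Valid K ∧ F.IsEmb K ∧ G.IsEmb K ∧
    F.i = i ∧ G.i = j ∧ F.j = G.j

/-- The `s`-computable amalgamation property. -/
def CAP (s : Set ℕ) (K : CompAge L) : Prop :=
  ∃ c : OCode, ∀ F₀ F₁ : PotEmb, PotSpan K F₀ F₁ →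
    ∃ G₀ G₁ : PotEmb,
      OCode.eval (chi s) c (Nat.pair F₀.code F₁.code) =
        Part.some (Nat.pair G₀.code G₁.code) ∧
      AmalgDiagOver K F₀ F₁ G₀ G₁

/-- A family `W` of distinguished embeddings with amalgamation-base codomains, closed
under pre/post composition with isomorphisms, covering all domains. -/
def IsCoAPFamily (K : CompAge L) (W : Set PotEmb) : Prop :=
  (∀ F ∈ W, F.Valid K ∧ F.IsEmb K ∧ AmalgBase K.cls (K.str F.j)) ∧
  (∀ F ∈ W, ∀ G H : PotEmb, G.Valid K → G.IsIso K → G.j = F.i →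
      CompRel K F G H → H ∈ W) ∧
  (∀ F ∈ W, ∀ G H : PotEmb, G.Valid K → G.IsIso K → G.i = F.j →
      CompRel K G F H → H ∈ W) ∧
  (∀ i : ℕ, ∃ F ∈ W, F.i = i)

/-- The `s`-computable cofinal amalgamation property: there is an `s`-c.e. family of
distinguished embeddings onto amalgamation bases together with an `s`-computable
amalgamation function. -/
def CcoAP (s : Set ℕ) (K : CompAge L) : Prop :=
  ∃ W : Set PotEmb, IsCoAPFamily K W ∧
    CEIn s { p | ∃ F ∈ W, p = F.code } ∧
    ∃ c : OCode, ∀ F ∈ W, ∀ G₀ G₁ : PotEmb,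
      G₀.Valid K → G₁.Valid K → G₀.i = F.j → G₁.i = F.j →
      ∃ D₀ D₁ : PotEmb,
        OCode.eval (chi s) c (Nat.pair F.code (Nat.pair G₀.code G₁.code)) =
          Part.some (Nat.pair D₀.code D₁.code) ∧
        AmalgDiagOver K G₀ G₁ D₀ D₁

/-! ### Ultrahomogeneity -/

/-- `M` is ultrahomogeneous: every isomorphism between finitely generated substructures
extends to an automorphism. -/
def Ultrahomogeneous (M : Str L) : Prop :=
  ∀ as bs : List ℕ, TupleIn M as → TupleIn M bs → ClSim M as M bs →
    ∃ g : ℕ → ℕ, IsAutoOf M g ∧ as.map g = bs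

/-- `g` is a bijection of the underlying set of `M` with itself. -/
def BijOnDom (M : Str L) (g : ℕ → ℕ) : Prop :=
  (∀ x ∈ M.dom, g x ∈ M.dom) ∧
  (∀ x ∈ M.dom, ∀ y ∈ M.dom, g x = g y → x = y) ∧
  (∀ y ∈ M.dom, ∃ x ∈ M.dom, g x = y)

/-- `M` is `s`-computably ultrahomogeneous. -/
def CompUltrahom (s : Set ℕ) (M : Str L) : Prop :=
  ∃ c : OCode, ∀ as bs : List ℕ, TupleIn M as → TupleIn M bs →
    as.length = bs.length →
    ∃ e : ℕ,
      OCode.eval (chi s) c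
          (Nat.pair (Encodable.encode as) (Encodable.encode bs)) = Part.some e ∧
      ∃ c' : OCode, c'.encodeCode = e ∧ ∃ g : ℕ → ℕ, ComputesIn s c' g ∧
        BijOnDom M g ∧
        (ClSim M as M bs → IsAutoOf M g ∧ as.map g = bs)

/-! ### Cofinal ultrahomogeneity -/

/-- `M` is cofinally ultrahomogeneous. -/
def CofinallyUltrahomogeneous (M : Str L) : Prop :=
  ∀ as : List ℕ, TupleIn M as → ∃ bs : List ℕ, TupleIn M bs ∧
    (∀ x ∈ as, InClosure M bs x) ∧
    ∀ cs : List ℕ, TupleIn M cs → ClSim M bs M cs →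
      ∃ g : ℕ → ℕ, IsAutoOf M g ∧ bs.map g = cs

/-- `E` is a cofinal collection of tuples in `M`. -/
def IsCofinalCollection (M : Str L) (E : Set (List ℕ)) : Prop :=
  (∀ bs ∈ E, TupleIn M bs) ∧
  (∀ as : List ℕ, TupleIn M as → ∃ bs ∈ E, ∀ x ∈ as, InClosure M bs x) ∧
  (∀ bs ∈ E, ∀ as : List ℕ, (∀ x ∈ as, InClosure M bs x) → (as ++ bs) ∈ E) ∧
  (∀ as ∈ E, ∀ bs : List ℕ, TupleIn M bs → ClSim M as M bs → bs ∈ E)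

/-- `M` is cofinally ultrahomogeneous for the collection `E`: every isomorphism between
substructures generated by members of `E` extends to an automorphism. -/
def CofUltraFor (M : Str L) (E : Set (List ℕ)) : Prop :=
  ∀ as ∈ E, ∀ bs ∈ E, ClSim M as M bs →
    ∃ g : ℕ → ℕ, IsAutoOf M g ∧ as.map g = bs

/-- The set of codes of members of `E`. -/
def ECodes (E : Set (List ℕ)) : Set ℕ := { p | ∃ as ∈ E, p = Encodable.encode as }

/-- The functional part of `s`-computable cofinal ultrahomogeneity with respect to `E`. -/
def CofUltraFunIn (s : Set ℕ) (M : Str L) (E : Set (List ℕ)) : Prop :=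
  ∃ c : OCode, ∀ as ∈ E, ∀ bs : List ℕ, TupleIn M bs → TupleSim as bs →
    ∃ e : ℕ,
      OCode.eval (chi s) c
          (Nat.pair (Encodable.encode as) (Encodable.encode bs)) = Part.some e ∧
      ∃ c' : OCode, c'.encodeCode = e ∧ ∃ g : ℕ → ℕ, ComputesIn s c' g ∧
        BijOnDom M g ∧ as.map g = bs ∧
        (ClSim M as M bs → IsAutoOf M g)

/-- `M` is `s`-computably cofinally ultrahomogeneous with respect to `E`. -/
def CompCofUltrahomWrt (s : Set ℕ) (M : Str L) (E : Set (List ℕ)) : Prop :=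
  IsCofinalCollection M E ∧ SetRecIn s (ECodes E) ∧ CofUltraFunIn s M E

/-- `M` is `s`-computably cofinally ultrahomogeneous. -/
def CompCofUltrahom (s : Set ℕ) (M : Str L) : Prop :=
  ∃ E : Set (List ℕ), CompCofUltrahomWrt s M E

/-- The `s`-computable cofinal extension property with respect to `E`. -/
def CompCofExtProp (s : Set ℕ) (M : Str L) (E : Set (List ℕ)) : Prop :=
  ∃ c : OCode, ∀ as bs cs : List ℕ, as ∈ E → cs ∈ E → TupleIn M bs →
    (∀ x ∈ as, InClosure M cs x) → TupleSim as bs →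
    ∃ ds : List ℕ,
      OCode.eval (chi s) c
          (Nat.pair (Encodable.encode as)
            (Nat.pair (Encodable.encode bs) (Encodable.encode cs))) =
        Part.some (Encodable.encode ds) ∧
      TupleIn M ds ∧ TupleSim (as ++ cs) (bs ++ ds) ∧
      (ClSim M as M bs →
        ClSim M ds M cs ∧ (∀ x ∈ bs, InClosure M ds x) ∧
        ∀ h h' : ℕ → ℕ,
          ds.map h = cs → IsIsoMap (M.sub ds) (M.sub cs) h →
          bs.map h' = as → IsIsoMap (M.sub bs) (M.sub as) h' →
          bs.map h = bs.map h')

/-! ### Canonical ages and limits -/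

/-- `K` is a canonical age of `M` (relative to the oracle `t`): the enumeration of
generating tuples is `t`-computable, lists every finite tuple of `M` infinitely often,
and `str i` is the substructure generated by `tup i`. -/
def IsCanonicalAgeOf (t : Set ℕ) (K : CompAge L) (M : Str L) : Prop :=
  TotalComputableIn t (fun i => Encodable.encode (K.tup i)) ∧
  (∀ i, TupleIn M (K.tup i)) ∧
  (∀ as : List ℕ, TupleIn M as → ∀ n : ℕ, ∃ i, n ≤ i ∧ K.tup i = as) ∧
  (∀ i, K.str i = M.sub (K.tup i))

/-- `K` represents the age of `M`. -/
def RepresentsAgeOf (K : CompAge L) (M : Str L) : Prop :=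
  (∀ i, AgeMemOf M (K.str i)) ∧
  (∀ B : Str L, AgeMemOf M B → ∃ i, Isom B (K.str i))

/-- `M` is a cofinal Fraïssé limit of (the age represented by) `K`. -/
def CofinalFraisseLimitOf (K : CompAge L) (M : Str L) : Prop :=
  CofinallyUltrahomogeneous M ∧ RepresentsAgeOf K M

/-- The enumerated age `K` is uniformly finite. -/
def UniformlyFinite (K : CompAge L) : Prop :=
  L.FiniteLang ∧ ∃ f : ℕ → ℕ, TotalComputableIn ∅ f ∧
    ∀ i, ∀ as : List ℕ, TupleIn (K.str i) as →
      { x | InClosure (K.str i) as x }.Finite ∧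
      { x | InClosure (K.str i) as x }.ncard ≤ f as.length

/-! Every copy of `M.sub as` inside `M`, for `as ∈ E`, is generated by a tuple `as'` with
`as ∼cl as'`; hence `as' ∈ E`, and cofinal ultrahomogeneity yields an automorphism of `M` moving
the copy back onto `M.sub as` pointwise. Realise the two structures to be amalgamated inside `M`,
move both by such automorphisms so that the two images of `M.sub as` become `M.sub as` itself, and
take the substructure of `M` generated by the two moved structures as the amalgam. -/

theorem map_map_eq_self {α β : Type*} {l : List α} {f : α → β} {g : β → α}
    (h : ∀ x ∈ l, g (f x) = x) : (l.map f).map g = l := by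
  rw [List.map_map, List.map_congr_left (f := g ∘ f) (g := id) h, List.map_id]

theorem tupleIn_sub_self {M : Str L} {s : List ℕ} (hs : TupleIn M s) : TupleIn (M.sub s) s :=
  fun x hx => InClosure.base hx (hs x hx)

theorem InClosure.mono {M : Str L} {s t : List ℕ} (hst : ∀ x ∈ s, InClosure M t x) {x : ℕ}
    (hx : InClosure M s x) : InClosure M t x := by
  induction hx with
  | base hxs _ => exact hst _ hxs
  | fn f as ha _ ih => exact InClosure.fn f as ha ih

theorem isIsoMap_id (A : Str L) : IsIsoMap A A id :=
  ⟨⟨fun _ hx => hx, fun _ _ _ _ h => h, fun r t _ => by rw [List.map_id],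
    fun f t _ _ => by rw [List.map_id]; rfl⟩, fun y hy => ⟨y, hy, rfl⟩⟩

namespace IsEmbMap

variable {A B C : Str L} {f g : ℕ → ℕ}

theorem tupleIn_map (hf : IsEmbMap A B f) {as : List ℕ} (has : TupleIn A as) :
    TupleIn B (as.map f) :=
  List.forall_mem_map.2 fun x hx => hf.1 x (has x hx)

theorem comp (hf : IsEmbMap A B f) (hg : IsEmbMap B C g) : IsEmbMap A C (g ∘ f) := by
  refine ⟨fun x hx => hg.1 _ (hf.1 x hx),
    fun x hx y hy hxy => hf.2.1 x hx y hy (hg.2.1 _ (hf.1 x hx) _ (hf.1 y hy) hxy),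
    fun r as has => ?_, fun h as ha has => ?_⟩
  · rw [hf.2.2.1 r as has, hg.2.2.1 r _ (hf.tupleIn_map has), List.map_map]
  · rw [Function.comp_apply, hf.2.2.2 h as ha has,
      hg.2.2.2 h _ (by rwa [List.length_map]) (hf.tupleIn_map has), List.map_map]

end IsEmbMap

theorem isEmbMap_sub_id (M : Str L) (s : List ℕ) : IsEmbMap (M.sub s) M id :=
  ⟨fun _ hx => InClosure.mem_dom hx, fun _ _ _ _ h => h,
    fun r as has => by rw [List.map_id]; exact ⟨And.left, fun h => ⟨h, has⟩⟩,
    fun f as _ _ => by rw [List.map_id]; rfl⟩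

theorem isEmbMap_sub_iff {A M : Str L} {s : List ℕ} {h : ℕ → ℕ} :
    IsEmbMap A (M.sub s) h ↔ IsEmbMap A M h ∧ ∀ x ∈ A.dom, InClosure M s (h x) := by
  refine ⟨fun hh => ⟨hh.comp (isEmbMap_sub_id M s), hh.1⟩,
    fun ⟨hh, hcl⟩ => ⟨hcl, hh.2.1, fun r as has => ?_, hh.2.2.2⟩⟩
  rw [hh.2.2.1 r as has]
  exact ⟨fun hr => ⟨hr, List.forall_mem_map.2 fun x hx => hcl x (has x hx)⟩, And.left⟩

theorem InClosure.map {M N : Str L} {s : List ℕ} {e : ℕ → ℕ} (he : IsEmbMap (M.sub s) N e)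
    {x : ℕ} (hx : InClosure M s x) : InClosure N (s.map e) (e x) := by
  induction hx with
  | base hxs hxd => exact .base (List.mem_map_of_mem hxs) (he.1 _ (.base hxs hxd))
  | fn f t ha ht ih =>
    rw [show e (M.fn f t) = N.fn f (t.map e) from he.2.2.2 f t ha ht]
    exact .fn f _ (by rwa [List.length_map]) (List.forall_mem_map.2 ih)

theorem InClosure.eq_of_map_eq {M N : Str L} {s : List ℕ} {e e' : ℕ → ℕ}
    (he : IsEmbMap (M.sub s) N e) (he' : IsEmbMap (M.sub s) N e') (hs : s.map e = s.map e')
    {x : ℕ} (hx : InClosure M s x) : e x = e' x := by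
  induction hx with
  | base hxs _ => exact List.map_inj_left.1 hs _ hxs
  | fn f t ha ht ih =>
    rw [show e (M.fn f t) = N.fn f (t.map e) from he.2.2.2 f t ha ht,
      show e' (M.fn f t) = N.fn f (t.map e') from he'.2.2.2 f t ha ht, List.map_congr_left ih]

theorem IsEmbMap.isIsoMap_sub_map {M N : Str L} {s : List ℕ} {e : ℕ → ℕ} (hs : TupleIn M s)
    (he : IsEmbMap (M.sub s) N e) : IsIsoMap (M.sub s) (N.sub (s.map e)) e := by
  refine ⟨isEmbMap_sub_iff.2 ⟨he, fun x hx => hx.map he⟩, fun y hy => ?_⟩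
  induction hy with
  | base hys _ =>
    obtain ⟨x, hx, rfl⟩ := List.mem_map.1 hys
    exact ⟨x, .base hx (hs x hx), rfl⟩
  | fn f t ha _ ih =>
    choose! pre hpre hepre using ih
    have ht : ∀ x ∈ t.map pre, InClosure M s x := List.forall_mem_map.2 hpre
    have ha' : L.funArity f = some (t.map pre).length := by rwa [List.length_map]
    refine ⟨M.fn f (t.map pre), .fn f _ ha' ht, ?_⟩
    rw [show e (M.fn f (t.map pre)) = N.fn f ((t.map pre).map e) from he.2.2.2 f _ ha' ht,
      map_map_eq_self hepre]

theorem IsIsoMap.exists_leftInverse {A B : Str L} {h : ℕ → ℕ} (hh : IsIsoMap A B h) :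
    ∃ h', IsIsoMap B A h' ∧ ∀ x ∈ A.dom, h' (h x) = x := by
  obtain ⟨⟨hdom, hinj, hrel, hfn⟩, hsurj⟩ := hh
  set h' := Function.invFunOn h A.dom
  have hleft : Set.LeftInvOn h' h A.dom :=
    Set.InjOn.leftInvOn_invFunOn fun x hx y hy => hinj x hx y hy
  have hmem : ∀ y ∈ B.dom, h' y ∈ A.dom := fun y hy => Function.invFunOn_mem (hsurj y hy)
  have hright : ∀ y ∈ B.dom, h (h' y) = y := fun y hy => Function.invFunOn_eq (hsurj y hy)
  have hmap : ∀ t, TupleIn B t → TupleIn A (t.map h') ∧ (t.map h').map h = t := fun t ht =>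
    ⟨List.forall_mem_map.2 fun y hy => hmem y (ht y hy),
      map_map_eq_self fun y hy => hright y (ht y hy)⟩
  refine ⟨h', ⟨⟨hmem, fun y hy z hz hyz => by rw [← hright y hy, ← hright z hz, hyz],
    fun r t ht => ?_, fun f t ha ht => ?_⟩, fun x hx => ⟨h x, hdom x hx, hleft hx⟩⟩,
    fun x hx => hleft hx⟩
  · obtain ⟨ht', hback⟩ := hmap t ht
    rw [hrel r _ ht', hback]
  · obtain ⟨ht', hback⟩ := hmap t ht
    have ha' : L.funArity f = some (t.map h').length := by rwa [List.length_map]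
    rw [← hleft (A.fn_mem f _ ha' ht'), hfn f _ ha' ht', hback]

theorem ClSim.symm {M N : Str L} {as bs : List ℕ} (has : TupleIn M as) (hab : ClSim M as N bs) :
    ClSim N bs M as := by
  obtain ⟨h, rfl, hh⟩ := hab
  obtain ⟨h', hh', hinv⟩ := hh.exists_leftInverse
  exact ⟨h', map_map_eq_self fun x hx => hinv x (.base hx (has x hx)), hh'⟩

theorem CofUltraFor.exists_isAutoOf_leftInverse {M : Str L} {E : Set (List ℕ)}
    (hM : CofUltraFor M E) (hE : IsCofinalCollection M E) {as : List ℕ} (has : as ∈ E)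
    {e : ℕ → ℕ} (he : IsEmbMap (M.sub as) M e) :
    ∃ g, IsAutoOf M g ∧ ∀ x, InClosure M as x → g (e x) = x := by
  have hTas := hE.1 as has
  have hcl : ClSim M as M (as.map e) := ⟨e, rfl, he.isIsoMap_sub_map hTas⟩
  have hmem : as.map e ∈ E := hE.2.2.2 as has _ (he.tupleIn_map (tupleIn_sub_self hTas)) hcl
  obtain ⟨g, hg, hgmap⟩ := hM _ hmem as has (hcl.symm hTas)
  refine ⟨g, hg, fun x hx => InClosure.eq_of_map_eq (he.comp hg.1) (isEmbMap_sub_id M as) ?_ hx⟩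
  rw [← List.map_map, hgmap, List.map_id]

theorem IsEmbMap.comp_isAutoOf {M B : Str L} {bs ts : List ℕ} {h g : ℕ → ℕ}
    (hh : IsEmbMap B (M.sub bs) h) (hg : IsAutoOf M g)
    (hts : ∀ y ∈ bs.map g, InClosure M ts y) : IsEmbMap B (M.sub ts) (g ∘ h) := by
  have hg' : IsEmbMap (M.sub bs) M g := (isEmbMap_sub_id M bs).comp hg.1
  exact isEmbMap_sub_iff.2 ⟨hh.comp hg', fun x hx => (InClosure.map hg' (hh.1 x hx)).mono hts⟩

/-- If `M` is cofinally ultrahomogeneous for a cofinal collection `E`,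
then the substructure generated by any member of `E` is an amalgamation base in the age
of `M`. -/
theorem cofultra_gives_amalg_bases {L : Lang} (M : Str L) (E : Set (List ℕ))
    (hE : IsCofinalCollection M E) (hM : CofUltraFor M E) :
    ∀ as ∈ E, AmalgBase (ageOf M) (M.sub as) := by
  intro as has
  refine ⟨⟨as, hE.1 as has, id, isIsoMap_id _⟩, ?_⟩
  rintro B₀ ⟨bs₀, hbs₀, h₀, hh₀⟩ B₁ ⟨bs₁, hbs₁, h₁, hh₁⟩ f₀ f₁ hf₀ hf₁
  obtain ⟨g₀, hg₀, hfix₀⟩ :=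
    hM.exists_isAutoOf_leftInverse hE has (isEmbMap_sub_iff.1 (hf₀.comp hh₀.1)).1
  obtain ⟨g₁, hg₁, hfix₁⟩ :=
    hM.exists_isAutoOf_leftInverse hE has (isEmbMap_sub_iff.1 (hf₁.comp hh₁.1)).1
  set ts := bs₀.map g₀ ++ bs₁.map g₁
  have hts : TupleIn M ts :=
    List.forall_mem_append.2 ⟨hg₀.1.tupleIn_map hbs₀, hg₁.1.tupleIn_map hbs₁⟩
  have hgen : ∀ y ∈ ts, InClosure M ts y := tupleIn_sub_self hts
  refine ⟨M.sub ts, ⟨ts, hts, id, isIsoMap_id _⟩, g₀ ∘ h₀, g₁ ∘ h₁,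
    hh₀.1.comp_isAutoOf hg₀ fun y hy => hgen y (List.mem_append_left _ hy),
    hh₁.1.comp_isAutoOf hg₁ fun y hy => hgen y (List.mem_append_right _ hy),
    fun x hx => (hfix₀ x hx).trans (hfix₁ x hx).symm⟩

end CFL
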